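/- For any real numbers a and b, the ratio [∫₀^{2π} (1/(2π))·(1/4)|cos(σ−a)|·sgn(cos(σ−a))·(−sgn(cos(σ−b))) dσ] / [∫₀^{2π} (1/(2π))·(1/4)|cos(σ−a)| dσ] equals −cos(a−b). -/
import Mathlib


open Real MeasureTheory intervalIntegral

lemma measurable_realSign : Measurable Real.sign := by
  have : Real.sign = fun r : ℝ => if r < 0 then (-1 : ℝ) else if 0 < r then 1 else 0 := rfl
  rw [this]
  exact Measurable.ite (measurableSet_lt measurable_id measurable_const) measurable_const
    (Measurable.ite (measurableSet_lt measurable_const measurable_id) measurable_const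
      measurable_const)

lemma abs_realSign_le (x : ℝ) : |Real.sign x| ≤ 1 := by
  rcases Real.sign_apply_eq x with h | h | h <;> rw [h] <;> norm_num

lemma mul_realSign (x : ℝ) : x * Real.sign x = |x| := by
  rcases lt_trichotomy x 0 with h | h | h
  · rw [Real.sign_of_neg h, abs_of_neg h]; ring
  · simp [h]
  · rw [Real.sign_of_pos h, abs_of_pos h]; ring

lemma abs_mul_realSign (x : ℝ) : |x| * Real.sign x = x := by
  rcases lt_trichotomy x 0 with h | h | h
  · rw [Real.sign_of_neg h, abs_of_neg h]; ring
  · simp [h]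
  · rw [Real.sign_of_pos h, abs_of_pos h]; ring

lemma intInt (e t₁ t₂ : ℝ) :
    IntervalIntegrable (fun τ => Real.cos (τ + e) * Real.sign (Real.cos τ)) volume t₁ t₂ := by
  rw [intervalIntegrable_iff]
  apply MeasureTheory.Integrable.mono' (g := fun _ : ℝ => (1 : ℝ))
  · exact (_root_.intervalIntegrable_const (c := (1:ℝ))).def'
  · exact (((Real.continuous_cos.comp (continuous_id.add continuous_const)).measurable).mul
      (measurable_realSign.comp Real.continuous_cos.measurable)).aestronglyMeasurable
  · filter_upwards with x
    calc |Real.cos (x + e) * Real.sign (Real.cos x)|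
        = |Real.cos (x + e)| * |Real.sign (Real.cos x)| := abs_mul _ _
      _ ≤ 1 * 1 := mul_le_mul (Real.abs_cos_le_one _) (abs_realSign_le _) (abs_nonneg _)
          zero_le_one
      _ = 1 := by ring

lemma ae_ne_real (c : ℝ) : ∀ᵐ x : ℝ, x ≠ c := by
  rw [MeasureTheory.ae_iff]
  have : {x : ℝ | ¬x ≠ c} = {c} := by ext x; simp [not_not]
  rw [this]
  exact Real.volume_singleton

lemma key_shifted (e : ℝ) :
    ∫ τ in (-(π / 2))..(3 * π / 2), Real.cos (τ + e) * Real.sign (Real.cos τ)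
      = 4 * Real.cos e := by
  have hsplit := intervalIntegral.integral_add_adjacent_intervals
    (intInt e (-(π / 2)) (π / 2)) (intInt e (π / 2) (3 * π / 2))
  rw [← hsplit]
  have h1 : ∫ τ in (-(π / 2))..(π / 2), Real.cos (τ + e) * Real.sign (Real.cos τ)
      = ∫ τ in (-(π / 2))..(π / 2), Real.cos (τ + e) := by
    apply intervalIntegral.integral_congr_ae
    filter_upwards [ae_ne_real (π / 2)] with x hx hmem
    rw [Set.uIoc_of_le (by linarith [Real.pi_pos] : -(π / 2) ≤ π / 2)] at hmem
    have hpos : 0 < Real.cos x :=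
      Real.cos_pos_of_mem_Ioo ⟨hmem.1, lt_of_le_of_ne hmem.2 hx⟩
    rw [Real.sign_of_pos hpos, mul_one]
  have h2 : ∫ τ in (π / 2)..(3 * π / 2), Real.cos (τ + e) * Real.sign (Real.cos τ)
      = ∫ τ in (π / 2)..(3 * π / 2), -Real.cos (τ + e) := by
    apply intervalIntegral.integral_congr_ae
    filter_upwards [ae_ne_real (3 * π / 2)] with x hx hmem
    rw [Set.uIoc_of_le (by linarith [Real.pi_pos] : (π / 2) ≤ 3 * π / 2)] at hmem
    have hlt : x < 3 * π / 2 := lt_of_le_of_ne hmem.2 hx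
    have hneg : Real.cos x < 0 :=
      Real.cos_neg_of_pi_div_two_lt_of_lt hmem.1 (by linarith)
    rw [Real.sign_of_neg hneg]; ring
  rw [h1, h2]
  have hc : ∀ u v : ℝ, ∫ τ in u..v, Real.cos (τ + e) = Real.sin (v + e) - Real.sin (u + e) := by
    intro u v
    rw [intervalIntegral.integral_comp_add_right (fun x => Real.cos x) e,
      integral_cos]
  rw [intervalIntegral.integral_neg, hc, hc]
  have e1 : Real.sin (π / 2 + e) = Real.cos e := by
    rw [Real.sin_add, Real.sin_pi_div_two, Real.cos_pi_div_two]; ring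
  have e2 : Real.sin (-(π / 2) + e) = -Real.cos e := by
    have : -(π / 2) + e = -(π / 2 - e) := by ring
    rw [this, Real.sin_neg, Real.sin_pi_div_two_sub]
  have e3 : Real.sin (3 * π / 2 + e) = -Real.cos e := by
    have : 3 * π / 2 + e = (π / 2 + e) + π := by ring
    rw [this, Real.sin_add_pi, e1]
  rw [e1, e2, e3]; ring

lemma key_integral (c d : ℝ) :
    ∫ σ in (0:ℝ)..(2 * π), Real.cos (σ - c) * Real.sign (Real.cos (σ - d))
      = 4 * Real.cos (c - d) := by
  have hper : Function.Periodic
      (fun σ => Real.cos (σ - c) * Real.sign (Real.cos (σ - d))) (2 * π) := by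
    intro x
    have h1 : x + 2 * π - c = (x - c) + 2 * π := by ring
    have h2 : x + 2 * π - d = (x - d) + 2 * π := by ring
    simp only [h1, h2, Real.cos_add_two_pi]
  have hshift := hper.intervalIntegral_add_eq 0 (d + -(π / 2))
  rw [zero_add] at hshift
  rw [hshift]
  have hcomp := intervalIntegral.integral_comp_add_right
    (fun σ => Real.cos (σ - c) * Real.sign (Real.cos (σ - d))) d
    (a := -(π / 2)) (b := 3 * π / 2)
  have hends1 : -(π / 2) + d = d + -(π / 2) := by ring
  have hends2 : (3:ℝ) * π / 2 + d = d + -(π / 2) + 2 * π := by ring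
  rw [hends1, hends2] at hcomp
  rw [← hcomp]
  have hfun : (fun τ : ℝ => Real.cos (τ + d - c) * Real.sign (Real.cos (τ + d - d)))
      = fun τ => Real.cos (τ + (d - c)) * Real.sign (Real.cos τ) := by
    funext τ
    have h1 : τ + d - c = τ + (d - c) := by ring
    have h2 : τ + d - d = τ := by ring
    rw [h1, h2]
  rw [hfun, key_shifted (d - c), Real.cos_sub, Real.cos_sub]
  ring

theorem conditional_correlation_eq (a b : ℝ) :
    (∫ σ in (0:ℝ)..(2 * π),
        (1 / (2 * π)) * ((1 / 4) * |Real.cos (σ - a)|) *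
          Real.sign (Real.cos (σ - a)) * (-Real.sign (Real.cos (σ - b)))) /
      (∫ σ in (0:ℝ)..(2 * π), (1 / (2 * π)) * ((1 / 4) * |Real.cos (σ - a)|))
      = -Real.cos (a - b) := by
  have hpi := Real.pi_ne_zero
  have hnum : (∫ σ in (0:ℝ)..(2 * π),
      (1 / (2 * π)) * ((1 / 4) * |Real.cos (σ - a)|) *
        Real.sign (Real.cos (σ - a)) * (-Real.sign (Real.cos (σ - b))))
      = -(1 / (8 * π)) * (4 * Real.cos (a - b)) := by
    have heq : (fun σ : ℝ => (1 / (2 * π)) * ((1 / 4) * |Real.cos (σ - a)|) *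
        Real.sign (Real.cos (σ - a)) * (-Real.sign (Real.cos (σ - b))))
        = fun σ => -(1 / (8 * π)) * (Real.cos (σ - a) * Real.sign (Real.cos (σ - b))) := by
      funext σ
      have h := abs_mul_realSign (Real.cos (σ - a))
      linear_combination (-(1 / (8 * π)) * Real.sign (Real.cos (σ - b))) * h
    rw [heq, intervalIntegral.integral_const_mul, key_integral a b]
  have hden : (∫ σ in (0:ℝ)..(2 * π), (1 / (2 * π)) * ((1 / 4) * |Real.cos (σ - a)|))
      = (1 / (8 * π)) * 4 := by
    have heq : (fun σ : ℝ => (1 / (2 * π)) * ((1 / 4) * |Real.cos (σ - a)|))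
        = fun σ => (1 / (8 * π)) * (Real.cos (σ - a) * Real.sign (Real.cos (σ - a))) := by
      funext σ
      have h := mul_realSign (Real.cos (σ - a))
      linear_combination (-(1 / (8 * π))) * h
    rw [heq, intervalIntegral.integral_const_mul, key_integral a a, sub_self, Real.cos_zero,
      mul_one]
  rw [hnum, hden]
  field_simp
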